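/- arXiv:1803.03030 — 2 statements merged into one kernel-verified Lean document; each statement's English description precedes it below -/
import Mathlib

section
/- For a proper convex function f on R^n and a point x with ∂f(x) nonempty and not containing 0, the polar of the descent cone equals the cone generated by the subdifferential: D(f,x)° = cl(∪_{t≥0} t·∂f(x)). -/
/-!
A subgradient `w` satisfies `⟪w, z⟫ ≤ 0` on the descent cone, so `D(f,x)° ⊇ ∂f(x)°°`.
Conversely, let `z ∈ ∂f(x)°`. Hahn–Banach applied to the sublinear map `f'(x; ·)` gives the
max formula `f'(x; z) = max_{w ∈ ∂f(x)} ⟪w, z⟫ ≤ 0`. Since `0 ∉ ∂f(x)` there is a `y` with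
`f y < f x`, and then `f'(x; z + ε (y - x)) < 0` for every `ε > 0`, so `z` lies in the closure
of `D(f,x)`. Hence `D(f,x)° = ∂f(x)°°`, which by the bipolar theorem is the closed cone
generated by the convex set `∂f(x)`.
-/

open scoped RealInnerProductSpace Pointwise

open Filter Topology Set

section Sublinear

variable {E : Type*} [AddCommGroup E] [Module ℝ E]

theorem exists_linearMap_le_eq_of_sublinear (N : E → ℝ)
    (N_hom : ∀ c : ℝ, 0 < c → ∀ y, N (c • y) = c * N y)
    (N_add : ∀ y y', N (y + y') ≤ N y + N y') (z : E) :
    ∃ g : E →ₗ[ℝ] ℝ, (∀ y, g y ≤ N y) ∧ g z = N z := by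
  have N_zero : N 0 = 0 := by
    have h := N_hom 2 two_pos 0
    rw [smul_zero] at h
    linarith
  have smul_le : ∀ c : ℝ, c * N z ≤ N (c • z) := by
    intro c
    rcases lt_trichotomy c 0 with hc | rfl | hc
    · have h := N_add (c • z) ((-c) • z)
      rw [← add_smul, add_neg_cancel, zero_smul, N_zero, N_hom _ (neg_pos.2 hc)] at h
      linarith
    · simp [N_zero]
    · rw [N_hom c hc]
  let p := LinearPMap.mkSpanSingleton' (σ := RingHom.id ℝ) z (N z) fun c hc =>
    le_antisymm (by simpa [hc, N_zero] using smul_le c)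
      (by simpa [hc, N_zero, neg_smul] using smul_le (-c))
  obtain ⟨g, hgp, hgN⟩ := exists_extension_of_le_sublinear p N N_hom N_add <| by
    rintro ⟨a, ha⟩
    obtain ⟨c, rfl⟩ := Submodule.mem_span_singleton.1 ha
    rw [LinearPMap.mkSpanSingleton'_apply]
    exact smul_le c
  exact ⟨g, hgN, (hgp ⟨z, Submodule.mem_span_singleton_self z⟩).trans
    (LinearPMap.mkSpanSingleton'_apply_self _ _ _ _)⟩

end Sublinear

section DirDeriv

variable {E : Type*} [AddCommGroup E] [Module ℝ E] {f : E → ℝ}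

/-- The one-sided directional derivative `f'(x; z)`: for convex `f` the difference quotients
decrease as `t ↓ 0`, so their infimum is their limit (`ConvexOn.tendsto_slope_dirDeriv`). -/
noncomputable def dirDeriv (f : E → ℝ) (x z : E) : ℝ :=
  sInf (slope (fun t : ℝ => f (x + t • z)) 0 '' Ioi 0)

lemma exists_pos_lt_of_dirDeriv_neg {x z : E} (h : dirDeriv f x z < 0) :
    ∃ t : ℝ, 0 < t ∧ f (x + t • z) < f x := by
  obtain ⟨_, ⟨t, ht, rfl⟩, hlt⟩ := exists_lt_of_csInf_lt (nonempty_Ioi.image _) h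
  rw [slope_def_field, sub_zero, div_lt_iff₀ ht, zero_mul, zero_smul, add_zero, sub_neg] at hlt
  exact ⟨t, ht, hlt⟩

namespace ConvexOn

lemma comp_line (hf : ConvexOn ℝ univ f) (x z : E) :
    ConvexOn ℝ univ fun t : ℝ => f (x + t • z) := by
  refine ⟨convex_univ, fun a _ b _ p q hp hq hpq => ?_⟩
  convert hf.2 (mem_univ (x + a • z)) (mem_univ (x + b • z)) hp hq hpq using 2
  rw [smul_add, smul_add, add_add_add_comm, ← add_smul, hpq, one_smul, smul_smul, smul_smul,
    add_smul, smul_eq_mul, smul_eq_mul]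

lemma bddBelow_slope_line (hf : ConvexOn ℝ univ f) (x z : E) :
    BddBelow (slope (fun t : ℝ => f (x + t • z)) 0 '' Ioi 0) := by
  refine ⟨slope (fun t : ℝ => f (x + t • z)) 0 (-1), ?_⟩
  rintro _ ⟨t, ht, rfl⟩
  exact (hf.comp_line x z).slope_mono (mem_univ 0) ⟨mem_univ _, by norm_num⟩
    ⟨mem_univ _, ht.out.ne'⟩ (by linarith [ht.out])

lemma tendsto_slope_dirDeriv (hf : ConvexOn ℝ univ f) (x z : E) :
    Tendsto (slope (fun t : ℝ => f (x + t • z)) 0) (𝓝[>] 0) (𝓝 (dirDeriv f x z)) :=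
  MonotoneOn.tendsto_nhdsGT
    ((hf.comp_line x z).slope_mono (mem_univ 0) |>.mono fun _ ht => ⟨mem_univ _, ht.out.ne'⟩)
    (hf.bddBelow_slope_line x z)

lemma tendsto_slope_mul_dirDeriv (hf : ConvexOn ℝ univ f) (x z : E) {c : ℝ} (hc : 0 < c) :
    Tendsto (fun t => slope (fun t : ℝ => f (x + t • z)) 0 (c * t)) (𝓝[>] 0)
      (𝓝 (dirDeriv f x z)) := by
  refine (hf.tendsto_slope_dirDeriv x z).comp <|
    tendsto_nhdsWithin_of_tendsto_nhds_of_eventually_within _ ?_ ?_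
  · exact ((continuous_const_mul c).tendsto' 0 0 (mul_zero c)).mono_left nhdsWithin_le_nhds
  · exact eventually_nhdsWithin_of_forall fun t ht => mul_pos hc ht

lemma dirDeriv_le_slope (hf : ConvexOn ℝ univ f) (x z : E) {t : ℝ} (ht : 0 < t) :
    dirDeriv f x z ≤ slope (fun t : ℝ => f (x + t • z)) 0 t :=
  csInf_le (hf.bddBelow_slope_line x z) ⟨t, ht, rfl⟩

lemma dirDeriv_le_sub (hf : ConvexOn ℝ univ f) (x z : E) :
    dirDeriv f x z ≤ f (x + z) - f x := by
  simpa [slope_def_field] using hf.dirDeriv_le_slope x z one_pos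

lemma dirDeriv_smul (hf : ConvexOn ℝ univ f) (x z : E) {c : ℝ} (hc : 0 < c) :
    dirDeriv f x (c • z) = c * dirDeriv f x z := by
  have hslope : slope (fun t : ℝ => f (x + t • c • z)) 0 =
      fun t => c * slope (fun t : ℝ => f (x + t • z)) 0 (c * t) := by
    ext t
    simp only [slope_def_field, smul_smul, zero_mul, zero_smul, add_zero, sub_zero]
    rcases eq_or_ne t 0 with rfl | ht
    · simp
    · field_simp
  refine tendsto_nhds_unique (hf.tendsto_slope_dirDeriv x (c • z)) ?_
  rw [hslope]
  exact (hf.tendsto_slope_mul_dirDeriv x z hc).const_mul c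

lemma slope_add_le (hf : ConvexOn ℝ univ f) (x y z : E) {t : ℝ} (ht : 0 < t) :
    slope (fun t : ℝ => f (x + t • (y + z))) 0 t ≤
      slope (fun t : ℝ => f (x + t • y)) 0 (2 * t) +
        slope (fun t : ℝ => f (x + t • z)) 0 (2 * t) := by
  have hmid := hf.2 (mem_univ (x + (2 * t) • y)) (mem_univ (x + (2 * t) • z))
    (by norm_num : (0 : ℝ) ≤ 1 / 2) (by norm_num : (0 : ℝ) ≤ 1 / 2) (by norm_num)
  have hpt : (1 / 2 : ℝ) • (x + (2 * t) • y) + (1 / 2 : ℝ) • (x + (2 * t) • z) =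
      x + t • (y + z) := by module
  rw [hpt, smul_eq_mul, smul_eq_mul] at hmid
  simp only [slope_def_field, zero_smul, add_zero, sub_zero]
  rw [← add_div, div_le_div_iff₀ ht (by positivity)]
  nlinarith [mul_le_mul_of_nonneg_left hmid ht.le]

lemma dirDeriv_add_le (hf : ConvexOn ℝ univ f) (x y z : E) :
    dirDeriv f x (y + z) ≤ dirDeriv f x y + dirDeriv f x z :=
  ge_of_tendsto ((hf.tendsto_slope_mul_dirDeriv x y two_pos).add
      (hf.tendsto_slope_mul_dirDeriv x z two_pos)) <|
    eventually_nhdsWithin_of_forall fun _ ht =>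
      (hf.dirDeriv_le_slope x _ ht).trans (hf.slope_add_le x y z ht)

end ConvexOn

end DirDeriv

section Cones

variable {E : Type*} [AddCommGroup E] [Module ℝ E]

def descentCone (f : E → ℝ) (x : E) : Set E :=
  {z | z = 0 ∨ ∃ t : ℝ, 0 < t ∧ f (x + t • z) ≤ f x}

lemma smul_mem_iUnion_smul {S : Set E} {t : ℝ} {s : E} (ht : 0 ≤ t) (hs : s ∈ S) :
    t • s ∈ ⋃ t ∈ {t : ℝ | 0 ≤ t}, t • S :=
  mem_iUnion₂.2 ⟨t, ht, smul_mem_smul_set hs⟩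

lemma iUnion_smul_subset_properCone [TopologicalSpace E] {S : Set E} {C : ProperCone ℝ E}
    (h : S ⊆ C) : ⋃ t ∈ {t : ℝ | 0 ≤ t}, t • S ⊆ C := by
  simp only [iUnion_subset_iff]
  rintro t ht _ ⟨s, hs, rfl⟩
  exact C.smul_mem (h hs) ht

def Convex.toPointedCone {S : Set E} (hS : Convex ℝ S) (hne : S.Nonempty) :
    PointedCone ℝ E where
  carrier := ⋃ t ∈ {t : ℝ | 0 ≤ t}, t • S
  zero_mem' := by
    obtain ⟨s, hs⟩ := hne
    simpa using smul_mem_iUnion_smul le_rfl hs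
  add_mem' {a b} ha hb := by
    obtain ⟨p, hp, ha⟩ := mem_iUnion₂.1 ha
    obtain ⟨q, hq, hb⟩ := mem_iUnion₂.1 hb
    obtain ⟨s, hs, hsum⟩ := hS.add_smul hp hq ▸ add_mem_add ha hb
    exact hsum ▸ smul_mem_iUnion_smul (add_nonneg hp hq) hs
  smul_mem' c a ha := by
    obtain ⟨t, ht, s, hs, rfl⟩ := mem_iUnion₂.1 ha
    exact mul_smul (c : ℝ) t s ▸ smul_mem_iUnion_smul (mul_nonneg c.2 ht) hs

end Cones

section Bipolar

variable {E : Type*} [NormedAddCommGroup E] [InnerProductSpace ℝ E] [CompleteSpace E]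

theorem Convex.closure_iUnion_smul_eq_innerDual_innerDual {S : Set E} (hS : Convex ℝ S)
    (hne : S.Nonempty) :
    closure (⋃ t ∈ {t : ℝ | 0 ≤ t}, t • S) =
      ProperCone.innerDual (ProperCone.innerDual S : Set E) := by
  let C : ProperCone ℝ E := Submodule.closure (hS.toPointedCone hne)
  have hC : (C : Set E) = closure (⋃ t ∈ {t : ℝ | 0 ≤ t}, t • S) :=
    Submodule.topologicalClosure_coe _
  have hSC : S ⊆ C := fun s hs =>
    hC ▸ subset_closure (by simpa using smul_mem_iUnion_smul zero_le_one hs)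
  refine subset_antisymm (closure_minimal (iUnion_smul_subset_properCone fun s hs y hy => ?_)
    (ProperCone.isClosed _)) ?_
  · simpa [real_inner_comm] using hy hs
  · rw [← hC, ← C.innerDual_innerDual]
    exact ProperCone.innerDual_le_innerDual (ProperCone.innerDual_le_innerDual hSC)

end Bipolar

section Subdifferential

variable {E : Type*} [NormedAddCommGroup E] [InnerProductSpace ℝ E] {f : E → ℝ} {x : E}

def subdifferential (f : E → ℝ) (x : E) : Set E :=
  {v | ∀ y, f x + ⟪v, y - x⟫ ≤ f y}

lemma convex_subdifferential (f : E → ℝ) (x : E) : Convex ℝ (subdifferential f x) := by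
  intro a ha b hb p q hp hq hpq y
  rw [inner_add_left, real_inner_smul_left, real_inner_smul_left]
  linear_combination p * ha y + q * hb y + (f y - f x) * hpq

lemma inner_nonpos_of_mem_subdifferential_of_mem_descentCone {w z : E}
    (hw : w ∈ subdifferential f x) (hz : z ∈ descentCone f x) : ⟪w, z⟫ ≤ 0 := by
  rcases hz with rfl | ⟨t, ht, hft⟩
  · rw [inner_zero_right]
  · have h := hw (x + t • z)
    rw [add_sub_cancel_left, real_inner_smul_right] at h
    nlinarith

variable [FiniteDimensional ℝ E]

theorem ConvexOn.exists_mem_subdifferential_inner_eq_dirDeriv (hf : ConvexOn ℝ univ f)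
    (x z : E) : ∃ w ∈ subdifferential f x, ⟪w, z⟫ = dirDeriv f x z := by
  obtain ⟨g, hg, hgz⟩ := exists_linearMap_le_eq_of_sublinear (dirDeriv f x)
    (fun _ hc y => hf.dirDeriv_smul x y hc) (hf.dirDeriv_add_le x) z
  let w := (InnerProductSpace.toDual ℝ E).symm (LinearMap.toContinuousLinearMap g)
  have hw : ∀ y, ⟪w, y⟫ = g y := fun _ => InnerProductSpace.toDual_symm_apply
  refine ⟨w, fun y => ?_, (hw z).trans hgz⟩
  have hgy := (hg (y - x)).trans (hf.dirDeriv_le_sub x (y - x))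
  rw [add_sub_cancel] at hgy
  linarith [hw (y - x)]

lemma ConvexOn.mem_closure_descentCone (hf : ConvexOn ℝ univ f) {y z : E} (hy : f y < f x)
    (hz : ∀ w ∈ subdifferential f x, ⟪w, z⟫ ≤ 0) : z ∈ closure (descentCone f x) := by
  obtain ⟨w, hw, hwz⟩ := hf.exists_mem_subdifferential_inner_eq_dirDeriv x z
  have hdz : dirDeriv f x z ≤ 0 := hwz ▸ hz w hw
  have hdy : dirDeriv f x (y - x) < 0 := by
    have := hf.dirDeriv_le_sub x (y - x)
    rw [add_sub_cancel] at this
    linarith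
  refine mem_closure_of_tendsto (f := fun ε : ℝ => z + ε • (y - x)) (b := 𝓝[>] 0) ?_ ?_
  · refine Tendsto.mono_left ?_ nhdsWithin_le_nhds
    simpa using ((continuous_id.smul continuous_const).const_add z :
      Continuous fun ε : ℝ => z + ε • (y - x)).tendsto 0
  · filter_upwards [self_mem_nhdsWithin] with ε hε
    have hneg : dirDeriv f x (z + ε • (y - x)) < 0 := by
      have := hf.dirDeriv_add_le x z (ε • (y - x))
      rw [hf.dirDeriv_smul x _ hε] at this
      linarith [mul_neg_of_pos_of_neg hε.out hdy]
    obtain ⟨t, ht, hlt⟩ := exists_pos_lt_of_dirDeriv_neg hneg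
    exact Or.inr ⟨t, ht, hlt.le⟩

/-- `ProperCone.innerDual` is the dual cone (`0 ≤ ⟪·, ·⟫`), so applying it twice gives the
bipolar `∂f(x)°°`. -/
theorem ConvexOn.polar_descentCone_eq (hf : ConvexOn ℝ univ f) {y : E} (hy : f y < f x) :
    {v | ∀ z ∈ descentCone f x, ⟪v, z⟫ ≤ 0} =
      ProperCone.innerDual (ProperCone.innerDual (subdifferential f x) : Set E) := by
  ext v
  simp only [mem_ofPred_eq, SetLike.mem_coe, ProperCone.mem_innerDual]
  constructor
  · intro hv u hu
    have hu' : -u ∈ closure (descentCone f x) :=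
      hf.mem_closure_descentCone hy fun w hw => by simpa [inner_neg_right] using hu hw
    have hclosed : IsClosed {z : E | ⟪v, z⟫ ≤ 0} :=
      isClosed_le (continuous_const.inner continuous_id) continuous_const
    have : ⟪v, -u⟫ ≤ 0 := closure_minimal hv hclosed hu'
    rw [inner_neg_right] at this
    rw [real_inner_comm]
    linarith
  · intro hv z hz
    have : 0 ≤ ⟪-z, v⟫ := hv fun w hw => by
      simpa [inner_neg_right] using inner_nonpos_of_mem_subdifferential_of_mem_descentCone hw hz
    rw [inner_neg_left, real_inner_comm] at this
    linarith

end Subdifferential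

/-- For a convex function `f : ℝⁿ → ℝ` and a point `x` with `∂f(x)` nonempty and not
containing `0`, the polar of the descent cone of `f` at `x` equals the closed cone
generated by the subdifferential: `D(f,x)° = cl(∪_{t ≥ 0} t ∂f(x))`. -/
theorem stmt16 (n : ℕ) (f : EuclideanSpace ℝ (Fin n) → ℝ)
    (hf : ConvexOn ℝ Set.univ f) (x : EuclideanSpace ℝ (Fin n))
    (sub : Set (EuclideanSpace ℝ (Fin n)))
    (hsub : sub = {v | ∀ y, f x + ⟪v, y - x⟫ ≤ f y})
    (hne : sub.Nonempty) (h0 : (0 : EuclideanSpace ℝ (Fin n)) ∉ sub)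
    (D : Set (EuclideanSpace ℝ (Fin n)))
    (hD : D = {z | z = 0 ∨ ∃ t : ℝ, 0 < t ∧ f (x + t • z) ≤ f x}) :
    {v | ∀ z ∈ D, ⟪v, z⟫ ≤ 0} = closure (⋃ t ∈ {t : ℝ | 0 ≤ t}, t • sub) := by
  subst hsub hD
  obtain ⟨y, hy⟩ : ∃ y, f y < f x := by
    by_contra! h
    exact h0 fun y => by simpa using h y
  exact (hf.polar_descentCone_eq hy).trans
    ((convex_subdifferential f x).closure_iUnion_smul_eq_innerDual_innerDual hne).symm
end

section
/- Let g ~ N(0, I_n), n ≥ 3, and let Ω be the one-dimensional difference operator. For a subset S̄ ⊆ {1,…,n−1}, E[ Σ_{j,k ∈ S̄} ⟨ω_j, ω_k⟩ sgn(⟨ω_j,g⟩) sgn(⟨ω_k,g⟩) ] = Σ_{j,k ∈ S̄} ⟨ω_j, ω_k⟩ (2/π) arcsin(⟨ω_j,ω_k⟩/2) ≤ 2|S̄| + (2/3)·#{i ∈ {2,…,n−1} : i ∈ S̄, i−1 ∈ S̄}. -/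
open MeasureTheory ProbabilityTheory Real

attribute [local instance] Classical.propDecidable

/-!
Writing `⟨ω_j, g⟩ = g_j - g_{j+1}`, the Gram entries `⟨ω_j, ω_k⟩` are `2` on the diagonal,
`-1` for adjacent rows and `0` otherwise. On the diagonal `sgn² = 1` almost surely, matching
`2 · (2/π) arcsin 1 = 2`. For adjacent rows, three pairwise distinct reals `x, y, z` satisfy
`sgn(x-y) sgn(y-z) + sgn(y-z) sgn(z-x) + sgn(z-x) sgn(x-y) = -1`; since i.i.d. coordinates are
exchangeable, the three terms have the same expectation, which is therefore
`-1/3 = (2/π) arcsin(-1/2)`. Summing, the diagonal contributes `2|S̄|` and each adjacent pair,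
counted twice, `1/3`, so the bound holds with equality.
-/

@[fun_prop]
lemma Real.measurable_sign : Measurable Real.sign := by
  unfold Real.sign
  exact Measurable.ite measurableSet_Iio measurable_const
    (Measurable.ite measurableSet_Ioi measurable_const measurable_const)

lemma Real.sign_mul_self_of_ne_zero {r : ℝ} (hr : r ≠ 0) : Real.sign r * Real.sign r = 1 := by
  rcases sign_apply_eq_of_ne_zero r hr with h | h <;> simp [h]

-- The three differences sum to zero, so exactly two of their signs agree.
lemma Real.sign_sub_mul_sign_sub_cyclic {x y z : ℝ} (hxy : x ≠ y) (hyz : y ≠ z) (hxz : x ≠ z) :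
    Real.sign (x - y) * Real.sign (y - z) + Real.sign (y - z) * Real.sign (z - x)
      + Real.sign (z - x) * Real.sign (x - y) = -1 := by
  rcases hxy.lt_or_gt with h1 | h1 <;> rcases hyz.lt_or_gt with h2 | h2 <;>
    rcases hxz.lt_or_gt with h3 | h3 <;>
    simp only [sign_of_neg, sign_of_pos, sub_neg, sub_pos, h1, h2, h3] <;>
    norm_num <;> linarith

lemma integrable_sign_mul_sign {Ω : Type*} [MeasurableSpace Ω] {μ : Measure Ω}
    [IsFiniteMeasure μ] {X Y : Ω → ℝ} (hX : Measurable X) (hY : Measurable Y) :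
    Integrable (fun ω => Real.sign (X ω) * Real.sign (Y ω)) μ := by
  refine .of_bound (by fun_prop) 1 (.of_forall fun ω => ?_)
  have hle : ∀ r : ℝ, |Real.sign r| ≤ 1 := fun r => by
    rcases sign_apply_eq r with h | h | h <;> simp [h]
  rw [norm_mul, Real.norm_eq_abs, Real.norm_eq_abs]
  exact mul_le_one₀ (hle _) (abs_nonneg _) (hle _)

lemma MeasureTheory.Measure.prod_diagonal_eq_zero {α : Type*} [MeasurableSpace α]
    [MeasurableEq α] {μ ν : Measure α} [SFinite ν] [NullSingletonClass ν] :
    (μ.prod ν) (Set.diagonal α) = 0 := by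
  rw [Measure.prod_apply measurableSet_diagonal]
  simp [Set.preimage, Set.diagonal]

section ProductMeasure

variable {ι : Type*} [Fintype ι] {ν : Measure ℝ}

lemma ae_apply_ne_apply [IsProbabilityMeasure ν] [NullSingletonClass ν] {i j : ι}
    (hij : i ≠ j) :
    ∀ᵐ g ∂(Measure.pi fun _ : ι => ν), g i ≠ g j := by
  have hindep : IndepFun (fun g : ι → ℝ => g i) (fun g => g j) (Measure.pi fun _ => ν) :=
    (iIndepFun_pi (X := fun _ x => x) fun _ => aemeasurable_id).indepFun hij
  have hmap := hindep.map_prod_eq_prod_map_map (measurable_pi_apply i).aemeasurable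
    (measurable_pi_apply j).aemeasurable
  rw [(measurePreserving_eval _ i).map_eq, (measurePreserving_eval _ j).map_eq] at hmap
  rw [ae_iff]
  simp only [ne_eq, not_not]
  calc (Measure.pi fun _ => ν) {g | g i = g j}
      = (Measure.pi fun _ => ν).map (fun g => (g i, g j)) (Set.diagonal ℝ) := by
        rw [Measure.map_apply (by fun_prop) measurableSet_diagonal]; rfl
    _ = 0 := by rw [hmap, Measure.prod_diagonal_eq_zero]

lemma integral_comp_perm [SigmaFinite ν] (σ : Equiv.Perm ι) (F : (ι → ℝ) → ℝ) :
    ∫ g, F (fun i => g (σ i)) ∂(Measure.pi fun _ => ν)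
      = ∫ g, F g ∂(Measure.pi fun _ => ν) := by
  have h := (measurePreserving_piCongrLeft (fun _ : ι => ν) σ.symm).integral_comp' F
  rw [← h]
  congr with g
  congr with i
  simpa using
    (MeasurableEquiv.piCongrLeft_apply_apply σ.symm (β := fun _ : ι => ℝ) g (σ i)).symm

lemma integral_sign_sub_mul_self [IsProbabilityMeasure ν] [NullSingletonClass ν] {a b : ι}
    (hab : a ≠ b) :
    ∫ g, Real.sign (g a - g b) * Real.sign (g a - g b) ∂(Measure.pi fun _ => ν) = 1 := by
  rw [integral_congr_ae ((ae_apply_ne_apply hab).mono fun g hg =>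
    sign_mul_self_of_ne_zero (sub_ne_zero.mpr hg)), integral_const]
  simp

lemma integral_sign_sub_mul_sign_sub [DecidableEq ι] [IsProbabilityMeasure ν]
    [NullSingletonClass ν] {a b c : ι} (hab : a ≠ b) (hbc : b ≠ c) (hac : a ≠ c) :
    ∫ g, Real.sign (g a - g b) * Real.sign (g b - g c) ∂(Measure.pi fun _ => ν)
      = -(1 / 3) := by
  set μ := Measure.pi fun _ : ι => ν
  let F : ι → ι → ι → (ι → ℝ) → ℝ :=
    fun x y z g => Real.sign (g x - g y) * Real.sign (g y - g z)
  have hF : ∀ x y z, Integrable (F x y z) μ := fun x y z =>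
    integrable_sign_mul_sign (by fun_prop) (by fun_prop)
  -- `swap a b * swap b c` is the cycle `a ↦ b ↦ c ↦ a`.
  have hbca : ∫ g, F b c a g ∂μ = ∫ g, F a b c g ∂μ := by
    simpa [F, Equiv.swap_apply_of_ne_of_ne, hab, hbc, hac, hab.symm, hbc.symm, hac.symm] using
      integral_comp_perm (Equiv.swap a b * Equiv.swap b c) (F a b c)
  have hcab : ∫ g, F c a b g ∂μ = ∫ g, F a b c g ∂μ := by
    simpa [F, Equiv.swap_apply_of_ne_of_ne, hab, hbc, hac, hab.symm, hbc.symm, hac.symm] using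
      integral_comp_perm (Equiv.swap b c * Equiv.swap a b) (F a b c)
  have hsum : ∫ g, (F a b c g + F b c a g + F c a b g) ∂μ = -1 := by
    have hae : ∀ᵐ g ∂μ, F a b c g + F b c a g + F c a b g = -1 := by
      filter_upwards [ae_apply_ne_apply hab, ae_apply_ne_apply hbc, ae_apply_ne_apply hac]
        with g h₁ h₂ h₃ using sign_sub_mul_sign_sub_cyclic h₁ h₂ h₃
    rw [integral_congr_ae hae, integral_const]
    simp
  have hF₁₂ : Integrable (fun g => F a b c g + F b c a g) μ := (hF a b c).add (hF b c a)
  rw [integral_add hF₁₂ (hF c a b), integral_add (hF a b c) (hF b c a), hbca, hcab] at hsum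
  linarith

end ProductMeasure

def diffRow (i l : ℕ) : ℝ := if l = i then 1 else if l = i + 1 then -1 else 0

def diffGram (j k : ℕ) : ℝ := if j = k then 2 else if j + 1 = k ∨ k + 1 = j then -1 else 0

lemma diffRow_eq_sub (i l : ℕ) :
    diffRow i l = (if l = i then 1 else 0) - (if l = i + 1 then 1 else 0) := by
  unfold diffRow; split_ifs <;> first | omega | norm_num

lemma sum_diffRow_mul_diffRow {n j k : ℕ} (hj : j + 1 < n) :
    ∑ l ∈ Finset.range n, diffRow j l * diffRow k l = diffGram j k := by
  simp only [diffRow_eq_sub, diffGram, mul_sub, sub_mul, ite_mul, one_mul, zero_mul,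
    Finset.sum_sub_distrib, Finset.sum_ite_eq', Finset.mem_range]
  split_ifs <;> first | omega | norm_num

lemma sum_diffRow_mul {n j : ℕ} (hj : j + 1 < n) (g : Fin n → ℝ) :
    ∑ l : Fin n, diffRow j l * g l = g ⟨j, by omega⟩ - g ⟨j + 1, hj⟩ := by
  have hval : ∀ (m : ℕ) (hm : m < n) (l : Fin n), (l : ℕ) = m ↔ l = ⟨m, hm⟩ :=
    fun m hm l => by rw [Fin.ext_iff]
  simp only [diffRow_eq_sub, sub_mul, ite_mul, one_mul, zero_mul, Finset.sum_sub_distrib,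
    hval j (by omega), hval (j + 1) hj, Finset.sum_ite_eq', Finset.mem_univ, if_true]

lemma diffGram_mul_arcsin (j k : ℕ) :
    diffGram j k * (2 / π * arcsin (diffGram j k / 2))
      = if j = k then 2 else if j + 1 = k ∨ k + 1 = j then 1 / 3 else 0 := by
  have harcsin : arcsin (1 / 2) = π / 6 := by
    rw [← sin_pi_div_six, arcsin_sin (by linarith [pi_pos]) (by linarith [pi_pos])]
  unfold diffGram
  split_ifs
  · rw [div_self two_ne_zero, arcsin_one]; field_simp
  · rw [show (-1 : ℝ) / 2 = -(1 / 2) by norm_num, arcsin_neg, harcsin]; field_simp; ring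
  · simp

lemma diffGram_mul_integral_sign_mul_sign {ν : Measure ℝ} [IsProbabilityMeasure ν]
    [NullSingletonClass ν] {n j k : ℕ} (hj : j + 1 < n) (hk : k + 1 < n) :
    diffGram j k * ∫ g, Real.sign (g ⟨j, by omega⟩ - g ⟨j + 1, hj⟩) *
        Real.sign (g ⟨k, by omega⟩ - g ⟨k + 1, hk⟩) ∂(Measure.pi fun _ : Fin n => ν)
      = diffGram j k * (2 / π * arcsin (diffGram j k / 2)) := by
  rw [diffGram_mul_arcsin]
  unfold diffGram
  split_ifs with hjk hadj
  · subst hjk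
    rw [integral_sign_sub_mul_self (Fin.ne_of_val_ne (by simp only; omega))]
    norm_num
  · rcases hadj with rfl | rfl
    · rw [integral_sign_sub_mul_sign_sub (Fin.ne_of_val_ne (by simp only; omega))
        (Fin.ne_of_val_ne (by simp only; omega)) (Fin.ne_of_val_ne (by simp only; omega))]
      norm_num
    · conv in Real.sign _ * Real.sign _ => rw [mul_comm]
      rw [integral_sign_sub_mul_sign_sub (Fin.ne_of_val_ne (by simp only; omega))
        (Fin.ne_of_val_ne (by simp only; omega)) (Fin.ne_of_val_ne (by simp only; omega))]
      norm_num
  · simp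

lemma sum_sum_ite_adjacent (S : Finset ℕ) :
    ∑ j ∈ S, ∑ k ∈ S,
        (if j = k then 2 else if j + 1 = k ∨ k + 1 = j then 1 / 3 else 0 : ℝ)
      = 2 * S.card + 2 / 3 * (S.filter fun j => j + 1 ∈ S).card := by
  have hsplit : ∀ j k : ℕ,
      (if j = k then 2 else if j + 1 = k ∨ k + 1 = j then 1 / 3 else 0 : ℝ)
        = 2 * (if j = k then 1 else 0) + 1 / 3 * (if j + 1 = k then 1 else 0)
          + 1 / 3 * (if k + 1 = j then 1 else 0) := by
    intro j k; split_ifs <;> first | omega | norm_num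
  simp only [hsplit, Finset.sum_add_distrib, ← Finset.mul_sum]
  rw [Finset.sum_comm (f := fun j k => if k + 1 = j then (1 : ℝ) else 0)]
  simp only [Finset.sum_ite_eq, Finset.sum_boole, Finset.filter_mem_eq_of_subset le_rfl]
  ring

lemma card_filter_succ_mem {n : ℕ} {S : Finset ℕ} (hS : S ⊆ Finset.range (n - 1)) :
    (S.filter fun j => j + 1 ∈ S).card
      = ((Finset.Icc 1 (n - 2)).filter fun i => i ∈ S ∧ i - 1 ∈ S).card := by
  have hlt : ∀ j ∈ S, j < n - 1 := fun j hj => Finset.mem_range.mp (hS hj)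
  refine Finset.card_nbij' (· + 1) (· - 1) ?_ ?_ ?_ ?_
  · intro j hj
    simp only [Finset.coe_filter, Set.mem_ofPred_eq, Finset.mem_Icc, add_tsub_cancel_right]
      at hj ⊢
    have := hlt _ hj.2
    exact ⟨⟨by omega, by omega⟩, hj.2, hj.1⟩
  · intro i hi
    simp only [Finset.coe_filter, Set.mem_ofPred_eq, Finset.mem_Icc] at hi ⊢
    exact ⟨hi.2.2, by rw [Nat.sub_add_cancel (by omega)]; exact hi.2.1⟩
  · intro j _
    simp
  · intro i hi
    simp only [Finset.coe_filter, Set.mem_ofPred_eq, Finset.mem_Icc] at hi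
    show i - 1 + 1 = i
    omega

theorem stmt19_general (n : ℕ)
    (ω : ℕ → ℕ → ℝ)
    (hω : ∀ i l, ω i l = if l = i then 1 else if l = i + 1 then -1 else 0)
    (Sb : Finset ℕ) (hSb : Sb ⊆ Finset.range (n - 1)) :
    (∫ g : Fin n → ℝ,
        ∑ j ∈ Sb, ∑ k ∈ Sb,
          (∑ l ∈ Finset.range n, ω j l * ω k l) *
            (Real.sign (∑ l : Fin n, ω j (l : ℕ) * g l) *
              Real.sign (∑ l : Fin n, ω k (l : ℕ) * g l))
        ∂(Measure.pi fun _ => gaussianReal 0 1))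
      = (∑ j ∈ Sb, ∑ k ∈ Sb,
          (∑ l ∈ Finset.range n, ω j l * ω k l) *
            ((2 / π) * Real.arcsin ((∑ l ∈ Finset.range n, ω j l * ω k l) / 2))) ∧
    (∑ j ∈ Sb, ∑ k ∈ Sb,
        (∑ l ∈ Finset.range n, ω j l * ω k l) *
          ((2 / π) * Real.arcsin ((∑ l ∈ Finset.range n, ω j l * ω k l) / 2)))
      ≤ 2 * (Sb.card : ℝ)
        + (2 / 3) * (((Finset.Icc 1 (n - 2)).filter
            (fun i => i ∈ Sb ∧ i - 1 ∈ Sb)).card : ℝ) := by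
  obtain rfl : ω = diffRow := funext fun i => funext (hω i)
  have hrow : ∀ j ∈ Sb, j + 1 < n := fun j hj => by
    have := Finset.mem_range.mp (hSb hj); omega
  have := nullSingletonClass_gaussianReal (μ := 0) one_ne_zero
  have hint : ∀ j k, Integrable (fun g : Fin n → ℝ =>
      (∑ l ∈ Finset.range n, diffRow j l * diffRow k l) *
        (Real.sign (∑ l : Fin n, diffRow j l * g l) *
          Real.sign (∑ l : Fin n, diffRow k l * g l)))
      (Measure.pi fun _ => gaussianReal 0 1) := fun j k =>
    (integrable_sign_mul_sign (by fun_prop) (by fun_prop)).const_mul _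
  constructor
  · rw [integral_finsetSum _ fun j _ => integrable_finsetSum _ fun k _ => hint j k]
    refine Finset.sum_congr rfl fun j hj => ?_
    rw [integral_finsetSum _ fun k _ => hint j k]
    refine Finset.sum_congr rfl fun k hk => ?_
    simp only [integral_const_mul, sum_diffRow_mul_diffRow (hrow j hj),
      sum_diffRow_mul (hrow j hj), sum_diffRow_mul (hrow k hk)]
    exact diffGram_mul_integral_sign_mul_sign (hrow j hj) (hrow k hk)
  · apply le_of_eq
    rw [← card_filter_succ_mem hSb, ← sum_sum_ite_adjacent]
    refine Finset.sum_congr rfl fun j hj => Finset.sum_congr rfl fun k _ => ?_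
    rw [sum_diffRow_mul_diffRow (hrow j hj), diffGram_mul_arcsin]

/-- For a standard Gaussian `g` in `ℝⁿ`, the difference operator with rows
`ω_i = e_i - e_{i+1}` (indexed from `0` to `n-2`) and a subset `S̄` of row indices,
`E[Σ_{j,k ∈ S̄} ⟨ω_j,ω_k⟩ sgn⟨ω_j,g⟩ sgn⟨ω_k,g⟩]
  = Σ_{j,k ∈ S̄} ⟨ω_j,ω_k⟩ (2/π) arcsin(⟨ω_j,ω_k⟩/2)
  ≤ 2|S̄| + (2/3) #{i : i ∈ S̄ ∧ i-1 ∈ S̄}`. -/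
theorem stmt19 (n : ℕ) (hn : 3 ≤ n)
    (ω : ℕ → ℕ → ℝ)
    (hω : ∀ i l, ω i l = if l = i then 1 else if l = i + 1 then -1 else 0)
    (Sb : Finset ℕ) (hSb : Sb ⊆ Finset.range (n - 1)) :
    (∫ g : Fin n → ℝ,
        ∑ j ∈ Sb, ∑ k ∈ Sb,
          (∑ l ∈ Finset.range n, ω j l * ω k l) *
            (Real.sign (∑ l : Fin n, ω j (l : ℕ) * g l) *
              Real.sign (∑ l : Fin n, ω k (l : ℕ) * g l))
        ∂(Measure.pi fun _ => gaussianReal 0 1))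
      = (∑ j ∈ Sb, ∑ k ∈ Sb,
          (∑ l ∈ Finset.range n, ω j l * ω k l) *
            ((2 / π) * Real.arcsin ((∑ l ∈ Finset.range n, ω j l * ω k l) / 2))) ∧
    (∑ j ∈ Sb, ∑ k ∈ Sb,
        (∑ l ∈ Finset.range n, ω j l * ω k l) *
          ((2 / π) * Real.arcsin ((∑ l ∈ Finset.range n, ω j l * ω k l) / 2)))
      ≤ 2 * (Sb.card : ℝ)
        + (2 / 3) * (((Finset.Icc 1 (n - 2)).filter
            (fun i => i ∈ Sb ∧ i - 1 ∈ Sb)).card : ℝ) :=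
  stmt19_general n ω hω Sb hSb
end
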